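/- (Quantum Fisher information dominates classical Fisher information) For any POVM measurement {X_x} on a pure state |ψ(θ)⟩ with outcome probabilities p(x;θ) = ⟨ψ|X_x†X_x|ψ⟩, the classical Fisher information satisfies E[(∂/∂θ log p(x;θ))²] ≤ 4[⟨∂_θψ|∂_θψ⟩ - |⟨ψ|∂_θψ⟩|²]. -/

import Mathlib

/-!
Replace `∂θψ` by its component `φ = ∂θψ - ⟨ψ|∂θψ⟩ ψ` orthogonal to `ψ`. Since `‖ψ‖ = 1`,
`⟨ψ|∂θψ⟩` is purely imaginary, so `∂θ p_x = 2 Re ⟨X_x ψ|X_x φ⟩` is unchanged by this replacement.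
Cauchy–Schwarz bounds each term `(∂θ p_x)² / p_x` by `4 ‖X_x φ‖²`, completeness `∑ X_x† X_x = I`
sums these to `4 ‖φ‖²`, and `‖φ‖² = ‖∂θψ‖² - |⟨ψ|∂θψ⟩|²`.
-/

open scoped InnerProductSpace InnerProduct
open RCLike Finset ContinuousLinearMap

section

variable {𝕜 E F : Type*} [RCLike 𝕜] [NormedAddCommGroup E] [InnerProductSpace 𝕜 E]
  [NormedAddCommGroup F] [InnerProductSpace 𝕜 F]

section Deriv

variable [NormedSpace ℝ E] [IsScalarTower ℝ 𝕜 E] [NormedSpace ℝ F] [IsScalarTower ℝ 𝕜 F]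

theorem HasDerivAt.norm_sq_map {f : ℝ → E} {f' : E} {t : ℝ} (A : E →L[𝕜] F)
    (hf : HasDerivAt f f' t) :
    HasDerivAt (fun s => ‖A (f s)‖ ^ 2) (2 * re ⟪A (f t), A f'⟫_𝕜) t := by
  have hAf : HasDerivAt (fun s => A (f s)) (A f') t :=
    (A.restrictScalars ℝ).hasFDerivAt.comp_hasDerivAt t hf
  have h := (reCLM (K := 𝕜)).hasFDerivAt.comp_hasDerivAt t (hAf.inner 𝕜 hAf)
  simp only [Function.comp_def, reCLM_apply, inner_self_eq_norm_sq, map_add] at h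
  refine h.congr_deriv ?_
  rw [← inner_conj_symm (A f'), conj_re]
  ring

theorem re_inner_eq_zero_of_norm_eq_const {f : ℝ → E} {f' : E} {t r : ℝ}
    (hf : ∀ s, ‖f s‖ = r) (hd : HasDerivAt f f' t) : re ⟪f t, f'⟫_𝕜 = 0 := by
  have hconst : HasDerivAt (fun s => ‖id (f s)‖ ^ 2) 0 t := by
    simpa only [id, hf] using hasDerivAt_const t (r ^ 2)
  simpa using (hd.norm_sq_map (ContinuousLinearMap.id 𝕜 E)).unique hconst

end Deriv

theorem re_inner_smul_self_eq_zero {c : 𝕜} (hc : re c = 0) (x : E) : re ⟪x, c • x⟫_𝕜 = 0 := by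
  simp [inner_smul_right, inner_self_eq_norm_sq_to_K, hc]

-- Also true at `x = 0`, where `0 / 0 = 0`: this is how outcomes of probability zero drop out.
theorem sq_re_inner_div_norm_sq_le (x y : E) : re ⟪x, y⟫_𝕜 ^ 2 / ‖x‖ ^ 2 ≤ ‖y‖ ^ 2 := by
  rcases eq_or_ne x 0 with rfl | hx
  · simp
  rw [div_le_iff₀ (by positivity), ← mul_pow, mul_comm]
  obtain ⟨hlo, hhi⟩ := abs_le.mp ((abs_re_le_norm ⟪x, y⟫_𝕜).trans (norm_inner_le_norm x y))
  exact sq_le_sq' hlo hhi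

theorem norm_sub_inner_smul_sq {x : E} (hx : ‖x‖ = 1) (y : E) :
    ‖y - ⟪x, y⟫_𝕜 • x‖ ^ 2 = ‖y‖ ^ 2 - ‖⟪x, y⟫_𝕜‖ ^ 2 := by
  rw [norm_sub_sq (𝕜 := 𝕜), inner_smul_right, ← inner_conj_symm y x, RCLike.mul_conj, norm_smul,
    hx, ← ofReal_pow, ofReal_re]
  ring

theorem sum_norm_sq_apply_eq_norm_sq [CompleteSpace E] [CompleteSpace F] {ι : Type*}
    (s : Finset ι) (M : ι → E →L[𝕜] F) (hM : ∑ i ∈ s, (M i)† ∘L M i = 1) (x : E) :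
    ∑ i ∈ s, ‖M i x‖ ^ 2 = ‖x‖ ^ 2 := by
  simp_rw [apply_norm_sq_eq_inner_adjoint_right]
  rw [← map_sum, ← inner_sum, ← _root_.sum_apply, hM, one_apply_eq_self, inner_self_eq_norm_sq]

end

/-- QFI dominates classical Fisher information: for any POVM `{Xᵢ}` on a pure state
`|ψ(θ)⟩` with Born-rule probabilities `pᵢ(θ) = ⟨ψ|Xᵢ†Xᵢ|ψ⟩`, the classical Fisher
information is at most `4[⟨∂θψ|∂θψ⟩ - |⟨ψ|∂θψ⟩|²]`. (Terms with `pᵢ(θ) = 0`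
contribute `0` to the sum, by the convention `a / 0 = 0`.) -/
theorem classical_fisher_le_qfi {H : Type*} [NormedAddCommGroup H]
    [InnerProductSpace ℂ H] [CompleteSpace H] {ι : Type*} [Fintype ι]
    (ψ dψ : ℝ → H) (θ : ℝ)
    (hψ : ∀ t, ‖ψ t‖ = 1)
    (hd : ∀ t, HasDerivAt ψ (dψ t) t)
    (M : ι → H →L[ℂ] H)
    (hM : ∑ i, (ContinuousLinearMap.adjoint (M i)).comp (M i) = 1)
    (p : ι → ℝ → ℝ)
    (hp : ∀ i t, p i t =
      (⟪ψ t, ((ContinuousLinearMap.adjoint (M i)).comp (M i)) (ψ t)⟫_ℂ).re) :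
    ∑ i, (deriv (p i) θ) ^ 2 / p i θ ≤
      4 * ((⟪dψ θ, dψ θ⟫_ℂ).re - ‖⟪ψ θ, dψ θ⟫_ℂ‖ ^ 2) := by
  set c := ⟪ψ θ, dψ θ⟫_ℂ
  set φ := dψ θ - c • ψ θ
  have hc : re c = 0 := re_inner_eq_zero_of_norm_eq_const hψ (hd θ)
  have hp_eq : ∀ i, p i = fun t => ‖M i (ψ t)‖ ^ 2 := fun i =>
    funext fun t => by rw [hp, apply_norm_sq_eq_inner_adjoint_right]; rfl
  have hderiv : ∀ i, deriv (p i) θ = 2 * re ⟪M i (ψ θ), M i φ⟫_ℂ := fun i => by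
    rw [hp_eq, ((hd θ).norm_sq_map (M i)).deriv, map_sub, map_smul, inner_sub_right, map_sub,
      re_inner_smul_self_eq_zero hc, sub_zero]
  calc ∑ i, deriv (p i) θ ^ 2 / p i θ
      = ∑ i, 4 * (re ⟪M i (ψ θ), M i φ⟫_ℂ ^ 2 / ‖M i (ψ θ)‖ ^ 2) := by
        refine sum_congr rfl fun i _ => ?_
        rw [hderiv, hp_eq]
        ring
    _ ≤ ∑ i, 4 * ‖M i φ‖ ^ 2 := by
        gcongr
        exact sq_re_inner_div_norm_sq_le _ _
    _ = 4 * ‖φ‖ ^ 2 := by rw [← mul_sum, sum_norm_sq_apply_eq_norm_sq _ M hM]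
    _ = 4 * ((⟪dψ θ, dψ θ⟫_ℂ).re - ‖c‖ ^ 2) := by
        rw [norm_sub_inner_smul_sq (hψ θ), ← inner_self_eq_norm_sq (𝕜 := ℂ)]
        rfl
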